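/- arXiv:2503.03676 — 2 statements merged into one kernel-verified Lean document; each statement's English description precedes it below -/
import Mathlib

section
/- Suppose that for some player i ∈ [n] at least two actions in A_i are σ-supported and σ_{ij} = σ_{ik} for all σ-supported j, k ∈ A_i. Then for every utility function u, σ is not a strict coarse correlated equilibrium (sCCE) for u. -/
open scoped BigOperators

section Prelim

variable {n : ℕ}

/-- Joint action obtained from player `i`'s action `j` and the other players' actions `b`,
i.e. the joint action `(j, a_{-i})`. -/
def joinA {A : Fin n → Type*} (i : Fin n) (j : A i)
    (b : ∀ l : {l : Fin n // l ≠ i}, A l) : ∀ l, A l :=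
  fun l => if h : l = i then h.symm ▸ j else b ⟨l, h⟩

/-- The actions `a_{-i}` of all players other than `i` in the joint action `a`. -/
def restr {A : Fin n → Type*} (i : Fin n) (a : ∀ l, A l) :
    ∀ l : {l : Fin n // l ≠ i}, A l :=
  fun l => a l

/-- `σ` is a mixed strategy: nonnegative and sums to one. -/
def IsMixed {X : Type*} [Fintype X] (σ : X → ℝ) : Prop :=
  (∀ x, 0 ≤ σ x) ∧ ∑ x, σ x = 1

/-- Marginal probability `p_{ij}` that player `i` plays `j` under `σ`. -/
noncomputable def marg {A : Fin n → Type*} [∀ l, Fintype (A l)]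
    (σ : (∀ l, A l) → ℝ) (i : Fin n) (j : A i) : ℝ :=
  ∑ b : ∀ l : {l : Fin n // l ≠ i}, A l, σ (joinA i j b)

/-- Conditional distribution `σ_{ij}` over the other players' actions:
`σ_{ij}(a_{-i}) = σ(j, a_{-i}) / p_{ij}` if `p_{ij} > 0`, and the zero function otherwise. -/
noncomputable def condl {A : Fin n → Type*} [∀ l, Fintype (A l)]
    (σ : (∀ l, A l) → ℝ) (i : Fin n) (j : A i) :
    (∀ l : {l : Fin n // l ≠ i}, A l) → ℝ :=
  fun b => if 0 < marg σ i j then σ (joinA i j b) / marg σ i j else 0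

/-- Euclidean norm `‖·‖₂` on `ℝ^X`. -/
noncomputable def norm2 {X : Type*} [Fintype X] (f : X → ℝ) : ℝ :=
  Real.sqrt (∑ x, f x ^ 2)

/-- Euclidean inner product `⟨·,·⟩` on `ℝ^X`. -/
noncomputable def inner2 {X : Type*} [Fintype X] (f g : X → ℝ) : ℝ :=
  ∑ x, f x * g x

/-- The witness utility `w_i(j, a_{-i}) = σ_{ij}(a_{-i}) / ‖σ_{ij}‖₂` if `p_{ij} > 0`,
and `0` otherwise. -/
noncomputable def wit {A : Fin n → Type*} [∀ l, Fintype (A l)]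
    (σ : (∀ l, A l) → ℝ) (i : Fin n) (a : ∀ l, A l) : ℝ :=
  if 0 < marg σ i (a i) then condl σ i (a i) (restr i a) / norm2 (condl σ i (a i)) else 0

open Classical in
/-- `t_{ijk} = ‖σ_{ij}‖₂ - ⟨σ_{ij}, σ_{ik}⟩ / ‖σ_{ik}‖₂` if `σ_{ik} ≠ 0`,
and `t_{ijk} = ‖σ_{ij}‖₂` if `σ_{ik} = 0`. -/
noncomputable def tq {A : Fin n → Type*} [∀ l, Fintype (A l)]
    (σ : (∀ l, A l) → ℝ) (i : Fin n) (j k : A i) : ℝ :=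
  if condl σ i k = 0 then norm2 (condl σ i j)
  else norm2 (condl σ i j) - inner2 (condl σ i j) (condl σ i k) / norm2 (condl σ i k)

end Prelim


section Aux
variable {n : ℕ} {A : Fin n → Type*} [∀ l, Fintype (A l)]

lemma joinA_apply_self (i : Fin n) (j : A i) (b : ∀ l : {l : Fin n // l ≠ i}, A l) :
    joinA i j b i = j := by simp [joinA]

lemma restr_joinA (i : Fin n) (j : A i) (b : ∀ l : {l : Fin n // l ≠ i}, A l) :
    restr i (joinA i j b) = b := by
  funext l
  simp [restr, joinA, l.2]

lemma joinA_restr (i : Fin n) (a : ∀ l, A l) : joinA i (a i) (restr i a) = a := by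
  funext l
  by_cases h : l = i
  · subst h; simp [joinA]
  · simp [joinA, restr, h]

/-- The split equivalence between joint actions and (own action, others' actions). -/
noncomputable def splitEquiv (i : Fin n) :
    (A i × ∀ l : {l : Fin n // l ≠ i}, A l) ≃ (∀ l, A l) where
  toFun p := joinA i p.1 p.2
  invFun a := (a i, restr i a)
  left_inv p := by
    refine Prod.ext ?_ ?_
    · exact joinA_apply_self i p.1 p.2
    · exact restr_joinA i p.1 p.2
  right_inv a := joinA_restr i a

lemma sum_split (i : Fin n) (f : (∀ l, A l) → ℝ) :
    ∑ a, f a = ∑ j : A i, ∑ b, f (joinA i j b) := by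
  rw [← Equiv.sum_comp (splitEquiv (A := A) i) f, Fintype.sum_prod_type]
  rfl

end Aux

/-- **sCCE necessity.** If some player `i` has at least two `σ`-supported actions and all
`σ`-supported actions of `i` have equal conditionals, then for every utility function `u`,
`σ` is not a strict coarse correlated equilibrium for `u`. -/
theorem sCCE_not_installable_of_equal_conditionals {n : ℕ} {A : Fin n → Type*}
    [∀ l, Fintype (A l)] [∀ l, Nonempty (A l)]
    (σ : (∀ l, A l) → ℝ) (hσ : IsMixed σ)
    (i : Fin n) (htwo : ∃ j k : A i, j ≠ k ∧ 0 < marg σ i j ∧ 0 < marg σ i k)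
    (heq : ∀ j k : A i, 0 < marg σ i j → 0 < marg σ i k → condl σ i j = condl σ i k) :
    ∀ u : Fin n → (∀ l, A l) → ℝ,
      ¬ (∀ i' : Fin n, ∀ k : A i', marg σ i' k < 1 →
          0 < ∑ a : ∀ l, A l, σ a * (u i' a - u i' (joinA i' k (restr i' a)))) := by
    classical
  intro u h
  obtain ⟨j0, k0, hjk, hj0, hk0⟩ := htwo
  have hσ0 := hσ.1
  have hmnn : ∀ j : A i, 0 ≤ marg σ i j := fun j =>
    Finset.sum_nonneg fun b _ => hσ0 _
  have hsum1 : ∑ j : A i, marg σ i j = 1 := by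
    rw [← hσ.2, sum_split i σ]; rfl
  set T : Finset (A i) := Finset.univ.filter (fun j => 0 < marg σ i j) with hT
  have hmemT : ∀ j : A i, j ∈ T ↔ 0 < marg σ i j := by
    intro j; simp [hT]
  have hj0T : j0 ∈ T := (hmemT j0).2 hj0
  have hk0T : k0 ∈ T := (hmemT k0).2 hk0
  have hmzero : ∀ j : A i, j ∉ T → marg σ i j = 0 := by
    intro j hj
    have : ¬ 0 < marg σ i j := by simpa [hmemT] using hj
    linarith [hmnn j]
  have hzero : ∀ j : A i, j ∉ T → ∀ b, σ (joinA i j b) = 0 := by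
    intro j hj b
    exact (Finset.sum_eq_zero_iff_of_nonneg (fun b _ => hσ0 _)).1 (hmzero j hj) b
      (Finset.mem_univ b)
  have hsumT : ∑ j ∈ T, marg σ i j = 1 := by
    rw [Finset.sum_subset T.subset_univ (fun j _ hj => hmzero j hj), hsum1]
  set m : (∀ l : {l : Fin n // l ≠ i}, A l) → ℝ := fun b => ∑ j : A i, σ (joinA i j b)
    with hm
  have hc : ∀ j ∈ T, ∀ b, σ (joinA i j b) = marg σ i j * condl σ i j0 b := by
    intro j hj b
    have hjpos := (hmemT j).1 hj
    have h1 : condl σ i j b = condl σ i j0 b := congrFun (heq j j0 hjpos hj0) b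
    have h2 : condl σ i j b = σ (joinA i j b) / marg σ i j := by simp [condl, hjpos]
    rw [← h1, h2, mul_comm, div_mul_cancel₀ _ hjpos.ne']
  have hm_eq : ∀ b, m b = condl σ i j0 b := by
    intro b
    have h3 : ∑ j ∈ T, σ (joinA i j b) = m b :=
      Finset.sum_subset T.subset_univ (fun j _ hj => hzero j hj b)
    rw [← h3, Finset.sum_congr rfl (fun j hj => hc j hj b), ← Finset.sum_mul, hsumT,
      one_mul]
  have hkey : ∀ j ∈ T, ∀ b, σ (joinA i j b) = marg σ i j * m b := by
    intro j hj b; rw [hm_eq b]; exact hc j hj b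
  set D : A i → ℝ := fun k => ∑ b, m b * u i (joinA i k b) with hD
  have hdev : ∀ k : A i, ∑ a, σ a * u i (joinA i k (restr i a)) = D k := by
    intro k
    rw [sum_split i (fun a => σ a * u i (joinA i k (restr i a)))]
    simp only [restr_joinA]
    rw [Finset.sum_comm]
    exact Finset.sum_congr rfl fun b _ => by rw [← Finset.sum_mul]
  have htot : ∑ a, σ a * u i a = ∑ j ∈ T, marg σ i j * D j := by
    rw [sum_split i (fun a => σ a * u i a)]
    have h4 : ∑ j ∈ T, ∑ b, σ (joinA i j b) * u i (joinA i j b)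
        = ∑ j : A i, ∑ b, σ (joinA i j b) * u i (joinA i j b) :=
      Finset.sum_subset T.subset_univ (fun j _ hj =>
        Finset.sum_eq_zero fun b _ => by rw [hzero j hj b, zero_mul])
    rw [← h4]
    refine Finset.sum_congr rfl fun j hj => ?_
    rw [hD, Finset.mul_sum]
    exact Finset.sum_congr rfl fun b _ => by rw [hkey j hj b, mul_assoc]
  obtain ⟨jm, hjmT, hjmax⟩ := T.exists_max_image D ⟨j0, hj0T⟩
  obtain ⟨k', hk'T, hne⟩ : ∃ k', k' ∈ T ∧ k' ≠ jm := by
    by_cases hcase : jm = j0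
    · exact ⟨k0, hk0T, by rw [hcase]; exact fun hh => hjk hh.symm⟩
    · exact ⟨j0, hj0T, fun hh => hcase hh.symm⟩
  have hlt : marg σ i jm < 1 := by
    have hsub : ({jm, k'} : Finset (A i)) ⊆ T := by
      intro x hx
      rcases Finset.mem_insert.1 hx with h | h
      · exact h ▸ hjmT
      · exact (Finset.mem_singleton.1 h) ▸ hk'T
    have hpair : marg σ i jm + marg σ i k' ≤ ∑ j ∈ T, marg σ i j := by
      rw [← Finset.sum_pair (Ne.symm hne)]
      exact Finset.sum_le_sum_of_subset_of_nonneg hsub (fun j _ _ => hmnn j)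
    have := (hmemT k').1 hk'T
    linarith [hsumT]
  have hS := h i jm hlt
  have hsplit : ∑ a, σ a * (u i a - u i (joinA i jm (restr i a)))
      = (∑ a, σ a * u i a) - ∑ a, σ a * u i (joinA i jm (restr i a)) := by
    rw [← Finset.sum_sub_distrib]
    exact Finset.sum_congr rfl fun a _ => by ring
  rw [hsplit, htot, hdev jm] at hS
  have hle : ∑ j ∈ T, marg σ i j * D j ≤ D jm := by
    calc ∑ j ∈ T, marg σ i j * D j ≤ ∑ j ∈ T, marg σ i j * D jm :=
          Finset.sum_le_sum fun j hj => mul_le_mul_of_nonneg_left (hjmax j hj) (hmnn j)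
      _ = D jm := by rw [← Finset.sum_mul, hsumT, one_mul]
  linarith
end

section
/- Let σ be a mixed strategy such that for all players i ∈ [n] and all pairs of σ-supported actions j, k ∈ A_i with j ≠ k one has σ_{ij} ≠ σ_{ik}. Define γ^{CE} as the minimum of t_{ijk} over all players i, σ-supported j ∈ A_i, and k ∈ A_i with k ≠ j; then γ^{CE} > 0. Moreover, for any B > 0 and any ε with 0 < ε ≤ B·γ^{CE}, the scaled witness utility u := B·w satisfies |u_i(j, a_{-i})| ≤ B for all i, j, a_{-i}, and for every player i, every σ-supported j ∈ A_i, and every k ∈ A_i with k ≠ j, ∑_{a_{-i}} σ_{ij}(a_{-i}) (u_i(j, a_{-i}) − u_i(k, a_{-i})) ≥ ε. -/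
open scoped BigOperators

/-! The witness `w_i(j, ·)` is the unit vector `σ_{ij} / ‖σ_{ij}‖₂`, so its coordinates lie in
`[-1, 1]`, and the expected deviation gap `∑ σ_{ij} (w_i(j, ·) - w_i(k, ·))` is
`⟨σ_{ij}, σ_{ij}⟩ / ‖σ_{ij}‖₂ - ⟨σ_{ij}, σ_{ik}⟩ / ‖σ_{ik}‖₂ = t_{ijk}`. Positivity of `t_{ijk}` is
strict Cauchy–Schwarz: conditionals of supported actions have coordinate sum `1`, so they are
positively parallel only when they are equal. -/

section Euclidean

open scoped RealInnerProductSpace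

variable {X : Type*} [Fintype X]

theorem norm2_eq_norm (f : X → ℝ) : norm2 f = ‖WithLp.toLp 2 f‖ := by
  simp [norm2, EuclideanSpace.norm_eq]

theorem inner2_eq_inner (f g : X → ℝ) : inner2 f g = ⟪WithLp.toLp 2 f, WithLp.toLp 2 g⟫ := by
  simp [inner2, PiLp.inner_apply, mul_comm]

theorem norm2_nonneg (f : X → ℝ) : 0 ≤ norm2 f := Real.sqrt_nonneg _

theorem abs_le_norm2 (f : X → ℝ) (x : X) : |f x| ≤ norm2 f := by
  simpa [norm2_eq_norm] using PiLp.norm_apply_le (WithLp.toLp 2 f) x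

theorem norm2_pos_of_sum_eq_one {f : X → ℝ} (hf : ∑ x, f x = 1) : 0 < norm2 f := by
  rw [norm2_eq_norm, norm_pos_iff]
  rintro h
  simp_all

theorem inner2_self_div_norm2 (f : X → ℝ) : inner2 f f / norm2 f = norm2 f := by
  rw [inner2_eq_inner, real_inner_self_eq_norm_sq, ← norm2_eq_norm, sq, mul_self_div_self]

/-- Vectors with coordinate sum `1` are positively parallel only if they are equal. -/
theorem inner2_lt_norm2_mul_norm2 {f g : X → ℝ} (hf : ∑ x, f x = 1) (hg : ∑ x, g x = 1)
    (hfg : f ≠ g) : inner2 f g < norm2 f * norm2 g := by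
  rw [inner2_eq_inner, norm2_eq_norm, norm2_eq_norm]
  refine (real_inner_le_norm _ _).lt_of_ne fun h => hfg ?_
  have hpar := inner_eq_norm_mul_iff_real.mp h
  rw [← norm2_eq_norm, ← norm2_eq_norm] at hpar
  have hcoord (x : X) : norm2 g * f x = norm2 f * g x := by
    simpa using congrArg (· x) hpar
  have hnorm : norm2 g = norm2 f := by
    have hsum : norm2 g * ∑ x, f x = norm2 f * ∑ x, g x := by simp only [Finset.mul_sum, hcoord]
    simpa [hf, hg] using hsum
  funext x
  exact mul_left_cancel₀ (norm2_pos_of_sum_eq_one hf).ne' (hnorm ▸ hcoord x)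

end Euclidean

section Game

variable {n : ℕ} {A : Fin n → Type*} [∀ l, Fintype (A l)] (σ : (∀ l, A l) → ℝ) (i : Fin n)

theorem sum_condl_eq_one {j : A i} (hj : 0 < marg σ i j) : ∑ b, condl σ i j b = 1 := by
  simp only [condl, if_pos hj, ← Finset.sum_div]
  exact div_self hj.ne'

theorem condl_eq_zero_iff (j : A i) : condl σ i j = 0 ↔ ¬ 0 < marg σ i j := by
  refine ⟨fun h hj => by simpa [h] using sum_condl_eq_one σ i hj, fun hj => ?_⟩
  funext b
  simp [condl, hj]

theorem wit_eq (a : ∀ l, A l) :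
    wit σ i a = condl σ i (a i) (restr i a) / norm2 (condl σ i (a i)) := by
  unfold wit
  split_ifs with h
  · rfl
  · simp [(condl_eq_zero_iff σ i (a i)).mpr h]

theorem wit_joinA (j : A i) (b : ∀ l : {l : Fin n // l ≠ i}, A l) :
    wit σ i (joinA i j b) = condl σ i j b / norm2 (condl σ i j) := by
  have hrestr : restr i (joinA i j b) = b := by
    funext l
    simp [restr, joinA, l.2]
  simp [wit_eq, hrestr, joinA]

/-- The case split in `tq` is redundant, since for `σ_{ik} = 0` the quotient is `0 / 0 = 0`. -/
theorem tq_eq (j k : A i) :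
    tq σ i j k =
      norm2 (condl σ i j) - inner2 (condl σ i j) (condl σ i k) / norm2 (condl σ i k) := by
  unfold tq
  split_ifs with h
  · simp [h, norm2, inner2]
  · rfl

theorem abs_wit_le_one (a : ∀ l, A l) : |wit σ i a| ≤ 1 := by
  rw [wit_eq, abs_div, abs_of_nonneg (norm2_nonneg _)]
  exact div_le_one_of_le₀ (abs_le_norm2 _ _) (norm2_nonneg _)

theorem tq_pos {j k : A i} (hj : 0 < marg σ i j)
    (hjk : 0 < marg σ i k → condl σ i j ≠ condl σ i k) : 0 < tq σ i j k := by
  have hfj := sum_condl_eq_one σ i hj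
  rw [tq_eq, sub_pos]
  by_cases hk : 0 < marg σ i k
  · have hfk := sum_condl_eq_one σ i hk
    rw [div_lt_iff₀ (norm2_pos_of_sum_eq_one hfk)]
    exact inner2_lt_norm2_mul_norm2 hfj hfk (hjk hk)
  · simp [(condl_eq_zero_iff σ i k).mpr hk, inner2, norm2_pos_of_sum_eq_one hfj]

theorem sum_condl_mul_wit_sub_wit (j k : A i) (B : ℝ) :
    ∑ b, condl σ i j b * (B * wit σ i (joinA i j b) - B * wit σ i (joinA i k b)) =
      B * tq σ i j k := by
  calc _ = B * (inner2 (condl σ i j) (condl σ i j) / norm2 (condl σ i j)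
          - inner2 (condl σ i j) (condl σ i k) / norm2 (condl σ i k)) := by
        simp only [wit_joinA, inner2, Finset.sum_div, mul_sub, Finset.sum_sub_distrib,
          Finset.mul_sum]
        congr 1 <;> exact Finset.sum_congr rfl fun b _ => by ring
    _ = B * tq σ i j k := by rw [inner2_self_div_norm2, tq_eq]

end Game

theorem eps_sCE_of_scaled_witness_general {n : ℕ} {A : Fin n → Type*}
    [∀ l, Fintype (A l)]
    (σ : (∀ l, A l) → ℝ)
    (hc : ∀ i : Fin n, ∀ j k : A i, 0 < marg σ i j → 0 < marg σ i k → j ≠ k →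
      condl σ i j ≠ condl σ i k) :
    (∀ i : Fin n, ∀ j k : A i, 0 < marg σ i j → k ≠ j → 0 < tq σ i j k) ∧
    (∀ B : ℝ, 0 < B → ∀ ε : ℝ, 0 < ε →
      (∀ i : Fin n, ∀ j k : A i, 0 < marg σ i j → k ≠ j → ε ≤ B * tq σ i j k) →
      ((∀ i : Fin n, ∀ a : ∀ l, A l, |B * wit σ i a| ≤ B) ∧
        ∀ i : Fin n, ∀ j : A i, 0 < marg σ i j → ∀ k : A i, k ≠ j →
          ε ≤ ∑ b : ∀ l : {l : Fin n // l ≠ i}, A l,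
                condl σ i j b * (B * wit σ i (joinA i j b) - B * wit σ i (joinA i k b)))) := by
  refine ⟨fun i j k hj hkj => tq_pos σ i hj fun hk => hc i j k hj hk hkj.symm,
    fun B hB ε _ hεB => ⟨fun i a => ?_, fun i j hj k hkj => ?_⟩⟩
  · rw [abs_mul, abs_of_pos hB]
    exact mul_le_of_le_one_right hB.le (abs_wit_le_one σ i a)
  · rw [sum_condl_mul_wit_sub_wit]
    exact hεB i j k hj hkj

/-- **ε-sCE via the scaled witness.** Suppose all pairs of `σ`-supported actions of each
player have differing conditionals. Then `γ^{CE} = min t_{ijk} > 0` (over players `i`,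
`σ`-supported `j`, and `k ≠ j`), i.e. each such `t_{ijk} > 0`; and for any `B > 0` and
`0 < ε ≤ B γ^{CE}` (i.e. `ε ≤ B t_{ijk}` for all such `i, j, k`), the scaled witness
`u = B w` is bounded by `B` and achieves a CE deviation gap of at least `ε`. -/
theorem eps_sCE_of_scaled_witness {n : ℕ} {A : Fin n → Type*}
    [∀ l, Fintype (A l)] [∀ l, Nonempty (A l)]
    (σ : (∀ l, A l) → ℝ) (hσ : IsMixed σ)
    (hc : ∀ i : Fin n, ∀ j k : A i, 0 < marg σ i j → 0 < marg σ i k → j ≠ k →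
      condl σ i j ≠ condl σ i k) :
    (∀ i : Fin n, ∀ j k : A i, 0 < marg σ i j → k ≠ j → 0 < tq σ i j k) ∧
    (∀ B : ℝ, 0 < B → ∀ ε : ℝ, 0 < ε →
      (∀ i : Fin n, ∀ j k : A i, 0 < marg σ i j → k ≠ j → ε ≤ B * tq σ i j k) →
      ((∀ i : Fin n, ∀ a : ∀ l, A l, |B * wit σ i a| ≤ B) ∧
        ∀ i : Fin n, ∀ j : A i, 0 < marg σ i j → ∀ k : A i, k ≠ j →
          ε ≤ ∑ b : ∀ l : {l : Fin n // l ≠ i}, A l,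
                condl σ i j b * (B * wit σ i (joinA i j b) - B * wit σ i (joinA i k b)))) :=
  eps_sCE_of_scaled_witness_general σ hc
end
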